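/- Let $S \subset \mathbb{R}^3$ be a bounded measurable set with $\mu(S) > 0$, and suppose there exist $C, h_0 > 0$ such that $\mu(S \triangle (S+h)) \le C\|h\|$ for all $\|h\| < h_0$. Let $u \in L^2(\mathbb{R}^3 \times [0,T]; \mathbb{R}^3)$ satisfy $\|u(\cdot,t)\|_{L^\infty} \in L^2(0,T)$. Then for any two continuous curves $w^{(1)}, w^{(2)} : [0,T_0] \to \mathbb{R}^3$ with $T_0 \le T$ and any $t \in [0,T_0]$, $$\left\| \int_0^t \int_{S + w^{(1)}(\tau)} u(x,\tau)\,dx\,d\tau - \int_0^t \int_{S + w^{(2)}(\tau)} u(x,\tau)\,dx\,d\tau \right\| \le C \sqrt{T_0}\, \|\,\|u(\cdot,\cdot)\|_{L^\infty}\|_{L^2(0,T)} \, \sup_{\tau \in [0,T_0]} \|w^{(1)}(\tau) - w^{(2)}(\tau)\|,$$ provided $\|w^{(1)}(\tau) - w^{(2)}(\tau)\| < h_0$ for all $\tau$. -/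

import Mathlib

/-!
Translating by `-w₁(τ)` turns the difference of the two inner integrals into a difference of
integrals over `S` and `S + (w₂(τ) - w₁(τ))`, which is bounded by
`‖u(·, τ)‖_∞ · μ(S △ (S + (w₂(τ) - w₁(τ)))) ≤ g(τ) · C M`. Integrating in time and applying
Cauchy–Schwarz to `∫₀ᵗ g` produces the factor `√T₀ ‖g‖_{L²(0,T)}`.
-/

open MeasureTheory Set

theorem norm_setIntegral_sub_setIntegral_le_mul_measureReal_symmDiff {α E : Type*}
    [MeasurableSpace α] [NormedAddCommGroup E] [NormedSpace ℝ E] {μ : Measure α} {f : α → E}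
    {K : ℝ} (hf : AEStronglyMeasurable f μ) (hfK : ∀ x, ‖f x‖ ≤ K) {s t : Set α}
    (hs : MeasurableSet s) (ht : MeasurableSet t) (hμs : μ s ≠ ⊤) (hμt : μ t ≠ ⊤) :
    ‖∫ x in s, f x ∂μ - ∫ x in t, f x ∂μ‖ ≤ K * μ.real (symmDiff s t) := by
  have hint : ∀ {r : Set α}, MeasurableSet r → μ r ≠ ⊤ → Integrable (r.indicator f) μ :=
    fun hr hμr => (integrable_indicator_iff hr).2 <|
      Integrable.mono' (integrableOn_const hμr) hf.restrict (ae_of_all _ hfK)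
  rw [← integral_indicator hs, ← integral_indicator ht, ← integral_sub (hint hs hμs) (hint ht hμt)]
  calc _ ≤ ∫ x, (symmDiff s t).indicator (fun _ => K) x ∂μ := by
        refine norm_integral_le_of_norm_le
          ((integrable_indicator_iff (hs.symmDiff ht)).2
            (integrableOn_const (measure_symmDiff_ne_top hμs hμt))) (ae_of_all _ fun x => ?_)
        rw [← apply_indicator_symmDiff norm_neg, norm_indicator_eq_indicator_norm]
        exact indicator_le_indicator (hfK x)
    _ = K * μ.real (symmDiff s t) := by
        rw [integral_indicator_const _ (hs.symmDiff ht), smul_eq_mul, mul_comm]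

section Translation

variable {G E : Type*} [AddCommGroup G] [MeasurableSpace G] [MeasurableAdd G]
  (μ : Measure G) [μ.IsAddRightInvariant] [NormedAddCommGroup E] [NormedSpace ℝ E]

theorem measure_image_add_right (s : Set G) (a : G) : μ ((· + a) '' s) = μ s := by
  rw [image_add_right, measure_preimage_add_right]

theorem measure_symmDiff_image_add_right (s : Set G) (a b : G) :
    μ (symmDiff ((· + a) '' s) ((· + b) '' s)) = μ (symmDiff s ((· + (b - a)) '' s)) := by
  rw [← measure_image_add_right μ (symmDiff s _) a, image_symmDiff (add_left_injective a),
    image_image]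
  simp only [add_assoc, sub_add_cancel]

theorem norm_setIntegral_image_add_right_sub_le {f : G → E} (hf : AEStronglyMeasurable f μ)
    {K : ℝ} (hfK : ∀ x, ‖f x‖ ≤ K) {s : Set G} (hs : MeasurableSet s) (hμs : μ s ≠ ⊤)
    (a b : G) :
    ‖∫ x in (· + a) '' s, f x ∂μ - ∫ x in (· + b) '' s, f x ∂μ‖
      ≤ K * μ.real (symmDiff s ((· + (b - a)) '' s)) := by
  have hmeas (c : G) := (measurableEmbedding_addRight c).measurableSet_image.2 hs
  rw [measureReal_def, ← measure_symmDiff_image_add_right, ← measureReal_def]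
  exact norm_setIntegral_sub_setIntegral_le_mul_measureReal_symmDiff hf hfK (hmeas a) (hmeas b)
    (by rwa [measure_image_add_right]) (by rwa [measure_image_add_right])

variable [MeasurableAdd₂ G] [SFinite μ] {T : Type*} [MeasurableSpace T] {ν : Measure T}
  {u : G → T → E} {w : T → G}

theorem aestronglyMeasurable_setIntegral_image_add_right
    (hu : StronglyMeasurable (Function.uncurry u)) (hw : AEMeasurable w ν) (s : Set G) :
    AEStronglyMeasurable (fun τ => ∫ x in (· + w τ) '' s, u x τ ∂μ) ν := by
  obtain ⟨v, hv, hwv⟩ := hw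
  have hmeas : StronglyMeasurable fun τ => ∫ x in s, u (x + v τ) τ ∂μ :=
    (hu.comp_measurable ((measurable_snd.add (hv.comp measurable_fst)).prodMk
      measurable_fst)).integral_prod_right'
  refine hmeas.aestronglyMeasurable.congr ?_
  filter_upwards [hwv] with τ hτ
  rw [hτ, (measurePreserving_add_right μ _).setIntegral_image_emb (measurableEmbedding_addRight _)]

theorem integrable_setIntegral_image_add_right
    (hu : StronglyMeasurable (Function.uncurry u)) (hw : AEMeasurable w ν) {s : Set G}
    (hμs : μ s ≠ ⊤) {g : T → ℝ} (hg : Integrable g ν) (hug : ∀ᵐ τ ∂ν, ∀ x, ‖u x τ‖ ≤ g τ) :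
    Integrable (fun τ => ∫ x in (· + w τ) '' s, u x τ ∂μ) ν := by
  refine Integrable.mono' (hg.mul_const (μ.real s))
    (aestronglyMeasurable_setIntegral_image_add_right μ hu hw s) ?_
  filter_upwards [hug] with τ hτ
  rw [measureReal_def, ← measure_image_add_right μ s (w τ), ← measureReal_def]
  exact norm_setIntegral_le_of_norm_le_const
    ((measure_image_add_right μ s (w τ)).trans_lt hμs.lt_top) (fun x _ => hτ x)

end Translation

section LipschitzShifts

variable {G E : Type*} [NormedAddCommGroup G] [MeasurableSpace G] [MeasurableAdd G]
  [NormedAddCommGroup E] [NormedSpace ℝ E]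

def HasLipschitzShifts (μ : Measure G) (s : Set G) (C h0 : ℝ) : Prop :=
  ∀ h : G, ‖h‖ < h0 → μ (symmDiff s ((· + h) '' s)) ≤ ENNReal.ofReal (C * ‖h‖)

theorem HasLipschitzShifts.norm_setIntegral_image_add_right_sub_le {μ : Measure G}
    [μ.IsAddRightInvariant] {s : Set G} {C h0 : ℝ} (hS : HasLipschitzShifts μ s C h0)
    (hC : 0 ≤ C) {a b : G} (hab : ‖a - b‖ < h0) {f : G → E} (hf : AEStronglyMeasurable f μ)
    {K : ℝ} (hfK : ∀ x, ‖f x‖ ≤ K) (hs : MeasurableSet s) (hμs : μ s ≠ ⊤) :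
    ‖∫ x in (· + a) '' s, f x ∂μ - ∫ x in (· + b) '' s, f x ∂μ‖ ≤ K * (C * ‖a - b‖) := by
  refine (_root_.norm_setIntegral_image_add_right_sub_le μ hf hfK hs hμs a b).trans
    (mul_le_mul_of_nonneg_left ?_ ((norm_nonneg _).trans (hfK 0)))
  rw [norm_sub_rev] at hab ⊢
  exact ENNReal.toReal_le_of_le_ofReal (by positivity) (hS _ hab)

end LipschitzShifts

theorem integral_le_sqrt_measureReal_univ_mul_sqrt_integral_sq {α : Type*} [MeasurableSpace α]
    {μ : Measure α} [IsFiniteMeasure μ] {g : α → ℝ} (hg : MemLp g 2 μ) :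
    ∫ x, g x ∂μ ≤ √(μ.real univ) * √(∫ x, g x ^ 2 ∂μ) := by
  have hg' : MemLp g (ENNReal.ofReal 2) μ := by rwa [ENNReal.ofReal_ofNat]
  calc ∫ x, g x ∂μ ≤ ∫ x, ‖(1 : ℝ)‖ * ‖g x‖ ∂μ :=
        integral_mono (hg.integrable one_le_two)
          (by simpa using (hg.integrable one_le_two).norm)
          fun x => by simpa using le_abs_self (g x)
    _ ≤ (∫ _, ‖(1 : ℝ)‖ ^ (2 : ℝ) ∂μ) ^ (1 / 2 : ℝ) * (∫ x, ‖g x‖ ^ (2 : ℝ) ∂μ) ^ (1 / 2 : ℝ) :=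
        integral_mul_norm_le_Lp_mul_Lq .two_two (memLp_const 1) hg'
    _ = √(μ.real univ) * √(∫ x, g x ^ 2 ∂μ) := by
        simp [Real.sqrt_eq_rpow]

theorem averaged_velocity_difference_estimate_general
    (S : Set (EuclideanSpace ℝ (Fin 3))) (hSb : Bornology.IsBounded S)
    (hSm : MeasurableSet S)
    (C h0 T T0 : ℝ) (hC : 0 < C) (hT0T : T0 ≤ T)
    (hshift : ∀ h : EuclideanSpace ℝ (Fin 3), ‖h‖ < h0 →
      volume (symmDiff S ((fun x => x + h) '' S)) ≤ ENNReal.ofReal (C * ‖h‖))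
    (u : EuclideanSpace ℝ (Fin 3) → ℝ → EuclideanSpace ℝ (Fin 3))
    (hu : Measurable (Function.uncurry u))
    (g : ℝ → ℝ) (hgm : Measurable g)
    (hg : ∀ t ∈ Set.Icc (0:ℝ) T, ∀ x, ‖u x t‖ ≤ g t)
    (hgL2 : IntegrableOn (fun t => (g t) ^ 2) (Set.Icc (0:ℝ) T))
    (w1 w2 : ℝ → EuclideanSpace ℝ (Fin 3))
    (hw1 : ContinuousOn w1 (Set.Icc 0 T0)) (hw2 : ContinuousOn w2 (Set.Icc 0 T0))
    (hclose : ∀ τ ∈ Set.Icc (0:ℝ) T0, ‖w1 τ - w2 τ‖ < h0)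
    (M : ℝ) (hM : ∀ τ ∈ Set.Icc (0:ℝ) T0, ‖w1 τ - w2 τ‖ ≤ M)
    (t : ℝ) (ht : t ∈ Set.Icc (0:ℝ) T0) :
    ‖(∫ τ in Set.Icc (0:ℝ) t, ∫ x in (fun y => y + w1 τ) '' S, u x τ) -
        ∫ τ in Set.Icc (0:ℝ) t, ∫ x in (fun y => y + w2 τ) '' S, u x τ‖
      ≤ C * Real.sqrt T0 * Real.sqrt (∫ τ in Set.Icc (0:ℝ) T, (g τ) ^ 2) * M := by
  have htT0 : Icc 0 t ⊆ Icc 0 T0 := Icc_subset_Icc le_rfl ht.2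
  have htT : Icc 0 t ⊆ Icc 0 T := htT0.trans (Icc_subset_Icc le_rfl hT0T)
  have hg2 : MemLp g 2 (volume.restrict (Icc 0 t)) :=
    (memLp_two_iff_integrable_sq hgm.aestronglyMeasurable).2 (hgL2.mono_set htT)
  have hA (w : ℝ → EuclideanSpace ℝ (Fin 3)) (hw : ContinuousOn w (Icc 0 T0)) :
      Integrable (fun τ => ∫ x in (· + w τ) '' S, u x τ) (volume.restrict (Icc 0 t)) :=
    integrable_setIntegral_image_add_right volume hu.stronglyMeasurable
      ((hw.aemeasurable measurableSet_Icc).mono_set htT0) hSb.measure_lt_top.ne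
      (hg2.integrable one_le_two)
      ((ae_restrict_mem measurableSet_Icc).mono fun τ hτ => hg τ (htT hτ))
  have hpoint : ∀ᵐ τ ∂volume.restrict (Icc 0 t),
      ‖(∫ x in (· + w1 τ) '' S, u x τ) - ∫ x in (· + w2 τ) '' S, u x τ‖ ≤ g τ * (C * M) := by
    filter_upwards [ae_restrict_mem measurableSet_Icc] with τ hτ
    calc _ ≤ g τ * (C * ‖w1 τ - w2 τ‖) :=
          HasLipschitzShifts.norm_setIntegral_image_add_right_sub_le hshift hC.le
            (hclose τ (htT0 hτ)) (hu.comp measurable_prodMk_right).aestronglyMeasurable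
            (hg τ (htT hτ)) hSm hSb.measure_lt_top.ne
      _ ≤ g τ * (C * M) := by
          have := (norm_nonneg _).trans (hg τ (htT hτ) 0)
          gcongr
          exact hM τ (htT0 hτ)
  have hCauchySchwarz : ∫ τ in Icc 0 t, g τ ≤ √T0 * √(∫ τ in Icc 0 T, g τ ^ 2) := by
    refine (integral_le_sqrt_measureReal_univ_mul_sqrt_integral_sq hg2).trans ?_
    gcongr
    · simpa [ht.1] using ht.2
    · exact ae_of_all _ fun τ => sq_nonneg (g τ)
  have hCM : 0 ≤ C * M := mul_nonneg hC.le ((norm_nonneg _).trans (hM t ht))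
  rw [← integral_sub (hA w1 hw1) (hA w2 hw2)]
  calc _ ≤ ∫ τ in Icc 0 t, g τ * (C * M) :=
        norm_integral_le_of_norm_le ((hg2.integrable one_le_two).mul_const _) hpoint
    _ = (∫ τ in Icc 0 t, g τ) * (C * M) := integral_mul_const _ _
    _ ≤ (√T0 * √(∫ τ in Icc 0 T, g τ ^ 2)) * (C * M) := by gcongr
    _ = _ := by ring

/-- Key estimate (3.4) of the paper: for a body set `S` satisfying the Lipschitz shift
condition and a velocity field `u` whose spatial sup-norm `g` is square integrable in time,
the difference of the averaged fluid velocities along two nearby curves `w₁, w₂` is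
controlled by `C √T₀ ‖g‖_{L²(0,T)} · sup ‖w₁ - w₂‖`. -/
theorem averaged_velocity_difference_estimate
    (S : Set (EuclideanSpace ℝ (Fin 3))) (hSb : Bornology.IsBounded S)
    (hSm : MeasurableSet S) (hSpos : 0 < volume S)
    (C h0 T T0 : ℝ) (hC : 0 < C) (hh0 : 0 < h0) (hT0 : 0 < T0) (hT0T : T0 ≤ T)
    (hshift : ∀ h : EuclideanSpace ℝ (Fin 3), ‖h‖ < h0 →
      volume (symmDiff S ((fun x => x + h) '' S)) ≤ ENNReal.ofReal (C * ‖h‖))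
    (u : EuclideanSpace ℝ (Fin 3) → ℝ → EuclideanSpace ℝ (Fin 3))
    (hu : Measurable (Function.uncurry u))
    (g : ℝ → ℝ) (hgm : Measurable g)
    (hg : ∀ t ∈ Set.Icc (0:ℝ) T, ∀ x, ‖u x t‖ ≤ g t)
    (hgL2 : IntegrableOn (fun t => (g t) ^ 2) (Set.Icc (0:ℝ) T))
    (w1 w2 : ℝ → EuclideanSpace ℝ (Fin 3))
    (hw1 : ContinuousOn w1 (Set.Icc 0 T0)) (hw2 : ContinuousOn w2 (Set.Icc 0 T0))
    (hclose : ∀ τ ∈ Set.Icc (0:ℝ) T0, ‖w1 τ - w2 τ‖ < h0)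
    (M : ℝ) (hM : ∀ τ ∈ Set.Icc (0:ℝ) T0, ‖w1 τ - w2 τ‖ ≤ M)
    (t : ℝ) (ht : t ∈ Set.Icc (0:ℝ) T0) :
    ‖(∫ τ in Set.Icc (0:ℝ) t, ∫ x in (fun y => y + w1 τ) '' S, u x τ) -
        ∫ τ in Set.Icc (0:ℝ) t, ∫ x in (fun y => y + w2 τ) '' S, u x τ‖
      ≤ C * Real.sqrt T0 * Real.sqrt (∫ τ in Set.Icc (0:ℝ) T, (g τ) ^ 2) * M :=
  averaged_velocity_difference_estimate_general S hSb hSm C h0 T T0 hC hT0T hshift u hu g hgm hg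
    hgL2 w1 w2 hw1 hw2 hclose M hM t ht
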